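/- arXiv:2105.07412 — 3 statements merged into one kernel-verified Lean document; each statement's English description precedes it below -/
import Mathlib

section
/- Set δ₋ = exp(−‖β‖_{L^∞}·max(U₀, Λ)) and δ₊ = 1, where U₀ = ∫₀^∞ u₀(a) da and Λ = α/(μ·e). For each sign ±, let b_± : [0,∞) → ℝ be the continuous solution of the linear Volterra equation b_±(t) = α·δ_±·( exp(−μt)·∫_t^∞ β(a)·u₀(a−t) da + ∫₀^t β(a)·exp(−μa)·b_±(t−a) da ), and define u_±(t,a) = exp(−μt)·u₀(a−t) if a ≥ t and u_±(t,a) = exp(−μa)·b_±(t−a) if a ≤ t. Then for every t ≥ 0 and almost every a ≥ 0, u_−(t,a) ≤ u(t,a) ≤ u_+(t,a). -/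
/-!
With `K a = β a exp (-μ a)` and the forcing term `g t = exp (-μ t) ∫_t^∞ β(a) u₀(a - t) da`, the
birth rates solve `b = α f(g + K ⋆ b)`, `b₊ = α (g + K ⋆ b₊)` and `b₋ = α δ₋ (g + K ⋆ b₋)`, where
`P = g + K ⋆ b = ∫ β u(t, ·)` is the `β`-weighted population. The three densities agree for
`a ≥ t` and are `exp (-μ a)` times the birth rates at `t - a` for `a < t`, so it suffices to show
`b₋ ≤ b ≤ b₊`.

Since `f x ≤ x`, `d = b₊ - b` satisfies `d ≥ α K ⋆ d`. Since `f ≤ 1/e`, `b ≤ α/e`, and with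
`β ≤ ‖β‖_∞` this bounds `P` by a convex combination of `‖β‖_∞ U₀` and `‖β‖_∞ Λ`; hence
`exp (-P) ≥ δ₋`, and as `P ≥ 0`, `d = b - b₋` satisfies `d ≥ α δ₋ K ⋆ d`. These, and `b ≥ 0`
(which gives `P ≥ 0`), follow from one positivity principle for Volterra inequalities with a
nonnegative kernel: at the first time `t₀` where `d` turns negative, the minimum `m < 0` of `d` on
a short window `[t₀, t₀ + ρ)` is at least `L m ∫₀^ρ K`, a small fraction of `m`.
-/

open MeasureTheory Filter Set Real Topology

lemma mul_exp_neg_le_self (x : ℝ) : x * exp (-x) ≤ x := by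
  rcases le_total 0 x with hx | hx
  · exact mul_le_of_le_one_right hx (exp_le_one_iff.2 (neg_nonpos.2 hx))
  · exact mul_le_of_one_le_right hx (one_le_exp_iff.2 (neg_nonneg.2 hx))

lemma exp_one_mul_min_le_mul_exp_neg {x y : ℝ} (hy : -1 ≤ y) (hyx : y ≤ x) :
    exp 1 * min 0 y ≤ x * exp (-x) := by
  rcases le_or_gt 0 x with hx | hx
  · exact (mul_nonpos_of_nonneg_of_nonpos (exp_pos 1).le (min_le_left 0 y)).trans
      (mul_nonneg hx (exp_pos _).le)
  · calc exp 1 * min 0 y = y * exp 1 := by rw [min_eq_right (by linarith), mul_comm]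
      _ ≤ x * exp 1 := mul_le_mul_of_nonneg_right hyx (exp_pos 1).le
      _ ≤ x * exp (-x) := mul_le_mul_of_nonpos_left (exp_le_exp.2 (by linarith)) hx.le

noncomputable def volterraConv (K d : ℝ → ℝ) (t : ℝ) : ℝ :=
  ∫ a in (0 : ℝ)..t, K a * d (t - a)

section Volterra

variable {K d : ℝ → ℝ} {t : ℝ}

lemma intervalIntegrable_mul_comp_sub (hKi : IntegrableOn K (Ioc 0 t))
    (hd : ContinuousOn d (Ici 0)) (ht : 0 ≤ t) :
    IntervalIntegrable (fun a => K a * d (t - a)) volume 0 t :=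
  ((intervalIntegrable_iff_integrableOn_Ioc_of_le ht).2 hKi).mul_continuousOn <|
    hd.comp (by fun_prop) fun a ha => by
      rw [uIcc_of_le ht] at ha
      exact sub_nonneg.2 ha.2

lemma volterraConv_sub {d₁ d₂ : ℝ → ℝ} (hKi : IntegrableOn K (Ioc 0 t))
    (hd₁ : ContinuousOn d₁ (Ici 0)) (hd₂ : ContinuousOn d₂ (Ici 0)) (ht : 0 ≤ t) :
    volterraConv K (d₁ - d₂) t = volterraConv K d₁ t - volterraConv K d₂ t := by
  simp only [volterraConv, Pi.sub_apply, mul_sub]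
  exact intervalIntegral.integral_sub (intervalIntegrable_mul_comp_sub hKi hd₁ ht)
    (intervalIntegrable_mul_comp_sub hKi hd₂ ht)

lemma volterraConv_nonneg (hK : ∀ a, 0 ≤ K a) (hd : ∀ s, 0 ≤ s → 0 ≤ d s) (ht : 0 ≤ t) :
    0 ≤ volterraConv K d t :=
  intervalIntegral.integral_nonneg ht fun a ha =>
    mul_nonneg (hK a) (hd _ (sub_nonneg.2 ha.2))

lemma volterraConv_le_mul_integral {B : ℝ} (hK : ∀ a, 0 ≤ K a)
    (hKi : IntegrableOn K (Ioc 0 t)) (hd : ContinuousOn d (Ici 0))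
    (hdB : ∀ s, 0 ≤ s → d s ≤ B) (ht : 0 ≤ t) :
    volterraConv K d t ≤ B * ∫ a in (0 : ℝ)..t, K a := by
  rw [← intervalIntegral.integral_const_mul]
  refine intervalIntegral.integral_mono_on ht (intervalIntegrable_mul_comp_sub hKi hd ht)
    (((intervalIntegrable_iff_integrableOn_Ioc_of_le ht).2 hKi).const_mul B) fun a ha => ?_
  rw [mul_comm B]
  exact mul_le_mul_of_nonneg_left (hdB _ (sub_nonneg.2 ha.2)) (hK a)

lemma mul_integral_le_volterraConv {t₀ m : ℝ} (hK : ∀ a, 0 ≤ K a)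
    (hKi : IntegrableOn K (Ioc 0 t)) (hd : ContinuousOn d (Ici 0)) (ht₀ : 0 ≤ t₀)
    (ht : t₀ ≤ t) (hd₀ : ∀ s, 0 ≤ s → s < t₀ → 0 ≤ d s)
    (hdm : ∀ s, t₀ ≤ s → s ≤ t → m ≤ d s) :
    m * ∫ a in (0 : ℝ)..(t - t₀), K a ≤ volterraConv K d t := by
  have ht' : 0 ≤ t := ht₀.trans ht
  have hint := intervalIntegrable_mul_comp_sub hKi hd ht'
  have hmem : t - t₀ ∈ uIcc 0 t := by rw [uIcc_of_le ht']; constructor <;> linarith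
  have h₁ := uIcc_subset_uIcc left_mem_uIcc hmem
  have h₂ := uIcc_subset_uIcc hmem right_mem_uIcc
  rw [volterraConv, ← intervalIntegral.integral_add_adjacent_intervals (hint.mono_set h₁)
    (hint.mono_set h₂), ← intervalIntegral.integral_const_mul]
  have hKi' := ((intervalIntegrable_iff_integrableOn_Ioc_of_le ht').2 hKi).mono_set h₁
  refine le_add_of_le_of_nonneg (intervalIntegral.integral_mono_on (sub_nonneg.2 ht)
    (hKi'.const_mul m) (hint.mono_set h₁) fun a ha => ?_) ?_
  · rw [mul_comm m]
    exact mul_le_mul_of_nonneg_left (hdm _ (by linarith [ha.2]) (by linarith [ha.1])) (hK a)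
  · rw [intervalIntegral.integral_of_le (by linarith)]
    exact setIntegral_nonneg measurableSet_Ioc fun a ha =>
      mul_nonneg (hK a) (hd₀ _ (by linarith [ha.2]) (by linarith [ha.1]))

lemma eventually_integral_lt {ε : ℝ} (hKi : IntegrableOn K (Ioc 0 1)) (hε : 0 < ε) :
    ∀ᶠ s in 𝓝[≥] 0, ∫ a in (0 : ℝ)..s, K a < ε := by
  have hF : ContinuousWithinAt (fun s => ∫ a in (0 : ℝ)..s, K a) (Icc 0 1) 0 := by
    rw [← uIcc_of_le zero_le_one]
    exact intervalIntegral.continuousOn_primitive_interval'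
      ((intervalIntegrable_iff_integrableOn_Ioc_of_le zero_le_one).2 hKi) left_mem_uIcc 0
      left_mem_uIcc
  exact (hF.mono_of_mem_nhdsWithin (Icc_mem_nhdsGE zero_lt_one)).eventually_lt_const
    (by simpa using hε)

lemma exists_first_neg_min (hd : ContinuousOn d (Ici 0)) {t₁ : ℝ} (ht₁ : 0 ≤ t₁)
    (hdt₁ : d t₁ < 0) :
    ∃ t₀, 0 ≤ t₀ ∧ (∀ s, 0 ≤ s → s < t₀ → 0 ≤ d s) ∧
      ∀ ρ > 0, ∃ s ∈ Ico t₀ (t₀ + ρ), d s < 0 ∧ ∀ x ∈ Icc t₀ s, d s ≤ d x := by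
  set S := {t | 0 ≤ t ∧ d t < 0}
  have hS : S.Nonempty := ⟨t₁, ht₁, hdt₁⟩
  have hSbdd : BddBelow S := ⟨0, fun _ h => h.1⟩
  have ht₀ : 0 ≤ sInf S := le_csInf hS fun _ h => h.1
  refine ⟨sInf S, ht₀, fun s hs hst => not_lt.1 fun h => (csInf_le hSbdd ⟨hs, h⟩).not_gt hst,
    fun ρ hρ => ?_⟩
  obtain ⟨t₂, ⟨ht₂, hdt₂⟩, ht₂ρ⟩ := exists_lt_of_csInf_lt hS (lt_add_of_pos_right _ hρ)
  have ht₀₂ : sInf S ≤ t₂ := csInf_le hSbdd ⟨ht₂, hdt₂⟩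
  obtain ⟨s, hs, hmin⟩ := isCompact_Icc.exists_isMinOn (nonempty_Icc.2 ht₀₂)
    (hd.mono fun x hx => ht₀.trans hx.1)
  exact ⟨s, ⟨hs.1, hs.2.trans_lt ht₂ρ⟩, (hmin ⟨ht₀₂, le_rfl⟩).trans_lt hdt₂,
    fun x hx => hmin ⟨hx.1, hx.2.trans hs.2⟩⟩

/-- The hypothesis is only asked where `K ⋆ d ≥ -r`, and through `min 0`, so that it also
covers the nonlinear equation `b = α (g + K ⋆ b) exp (-(g + K ⋆ b))` with `g ≥ 0`. -/
theorem nonneg_of_mul_min_volterraConv_le {L r : ℝ} (hK : ∀ a, 0 ≤ K a)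
    (hKi : ∀ t, IntegrableOn K (Ioc 0 t)) (hd : ContinuousOn d (Ici 0)) (hL : 0 ≤ L)
    (hr : 0 < r)
    (h : ∀ t, 0 ≤ t → -r ≤ volterraConv K d t → L * min 0 (volterraConv K d t) ≤ d t) :
    ∀ t, 0 ≤ t → 0 ≤ d t := by
  by_contra! ⟨t₁, ht₁, hdt₁⟩
  obtain ⟨t₀, ht₀, hd₀, hwindow⟩ := exists_first_neg_min hd ht₁ hdt₁
  obtain ⟨B, hB⟩ := isCompact_Icc.exists_bound_of_continuousOn
    (hd.mono (Icc_subset_Ici_self : Icc 0 (t₀ + 1) ⊆ Ici 0))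
  obtain ⟨ρ, hρ, hsmall⟩ := mem_nhdsGE_iff_exists_Ico_subset.1
    (((eventually_integral_lt (hKi 1) (by positivity : 0 < r / (|B| + 1))).and
      (eventually_integral_lt (hKi 1) (by positivity : 0 < 1 / (L + 1)))).and
      (eventually_nhdsWithin_of_eventually_nhds (eventually_lt_nhds zero_lt_one)))
  obtain ⟨s, hs, hm, hmin⟩ := hwindow ρ hρ
  obtain ⟨⟨hFr, hFL⟩, hs1⟩ := hsmall ⟨sub_nonneg.2 hs.1, by linarith [hs.2]⟩
  set F := ∫ a in (0 : ℝ)..(s - t₀), K a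
  have hF : 0 ≤ F := intervalIntegral.integral_nonneg (sub_nonneg.2 hs.1) fun a _ => hK a
  have hconv : d s * F ≤ volterraConv K d s :=
    mul_integral_le_volterraConv hK (hKi s) hd ht₀ hs.1 hd₀ fun x hx₁ hx₂ => hmin x ⟨hx₁, hx₂⟩
  have hBs : -B ≤ d s := neg_le_of_abs_le (hB s ⟨ht₀.trans hs.1, by linarith⟩)
  have hFr' : F * (|B| + 1) < r := (lt_div_iff₀ (by positivity)).1 hFr
  have hFL' : F * (L + 1) < 1 := (lt_div_iff₀ (by positivity)).1 (by simpa using hFL)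
  have hds := h s (ht₀.trans hs.1) (by nlinarith [le_abs_self B])
  have : L * (d s * F) ≤ L * min 0 (volterraConv K d s) :=
    mul_le_mul_of_nonneg_left (le_min (mul_nonpos_of_nonpos_of_nonneg hm.le hF) hconv) hL
  nlinarith

theorem nonneg_of_mul_volterraConv_le {L : ℝ} (hK : ∀ a, 0 ≤ K a)
    (hKi : ∀ t, IntegrableOn K (Ioc 0 t)) (hd : ContinuousOn d (Ici 0)) (hL : 0 ≤ L)
    (h : ∀ t, 0 ≤ t → L * volterraConv K d t ≤ d t) : ∀ t, 0 ≤ t → 0 ≤ d t :=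
  nonneg_of_mul_min_volterraConv_le hK hKi hd hL one_pos fun t ht _ =>
    (mul_le_mul_of_nonneg_left (min_le_right _ _) hL).trans (h t ht)

end Volterra

section Renewal

variable {K g b : ℝ → ℝ} {α : ℝ}

theorem renewal_solution_nonneg (hK : ∀ a, 0 ≤ K a) (hKi : ∀ t, IntegrableOn K (Ioc 0 t))
    (hg : ∀ t, 0 ≤ t → 0 ≤ g t) (hα : 0 ≤ α) (hb : ContinuousOn b (Ici 0))
    (hbeq : ∀ t, 0 ≤ t →
      b t = α * ((g t + volterraConv K b t) * exp (-(g t + volterraConv K b t)))) :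
    ∀ t, 0 ≤ t → 0 ≤ b t :=
  nonneg_of_mul_min_volterraConv_le hK hKi hb (by positivity : 0 ≤ α * exp 1) one_pos
    fun t ht hJ => by
      rw [hbeq t ht, mul_assoc]
      exact mul_le_mul_of_nonneg_left
        (exp_one_mul_min_le_mul_exp_neg hJ (le_add_of_nonneg_left (hg t ht))) hα

theorem renewal_solution_le_linear {bp : ℝ → ℝ} (hK : ∀ a, 0 ≤ K a)
    (hKi : ∀ t, IntegrableOn K (Ioc 0 t)) (hα : 0 ≤ α) (hb : ContinuousOn b (Ici 0))
    (hbp : ContinuousOn bp (Ici 0))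
    (hbeq : ∀ t, 0 ≤ t →
      b t = α * ((g t + volterraConv K b t) * exp (-(g t + volterraConv K b t))))
    (hbpeq : ∀ t, 0 ≤ t → bp t = α * (g t + volterraConv K bp t)) :
    ∀ t, 0 ≤ t → b t ≤ bp t := by
  refine fun t ht => sub_nonneg.1 (nonneg_of_mul_volterraConv_le hK hKi (hbp.sub hb) hα
    (fun t ht => ?_) t ht)
  rw [volterraConv_sub (hKi t) hbp hb ht, Pi.sub_apply, hbeq t ht, hbpeq t ht]
  nlinarith [mul_exp_neg_le_self (g t + volterraConv K b t)]

theorem linear_le_renewal_solution {bm : ℝ → ℝ} {δ : ℝ} (hK : ∀ a, 0 ≤ K a)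
    (hKi : ∀ t, IntegrableOn K (Ioc 0 t)) (hg : ∀ t, 0 ≤ t → 0 ≤ g t) (hα : 0 ≤ α)
    (hδ : 0 ≤ δ) (hb : ContinuousOn b (Ici 0)) (hbm : ContinuousOn bm (Ici 0))
    (hbeq : ∀ t, 0 ≤ t →
      b t = α * ((g t + volterraConv K b t) * exp (-(g t + volterraConv K b t))))
    (hbmeq : ∀ t, 0 ≤ t → bm t = α * δ * (g t + volterraConv K bm t))
    (hδb : ∀ t, 0 ≤ t → δ ≤ exp (-(g t + volterraConv K b t))) :
    ∀ t, 0 ≤ t → bm t ≤ b t := by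
  have hb₀ := renewal_solution_nonneg hK hKi hg hα hb hbeq
  refine fun t ht => sub_nonneg.1 (nonneg_of_mul_volterraConv_le hK hKi (hb.sub hbm)
    (mul_nonneg hα hδ) (fun t ht => ?_) t ht)
  have hX : 0 ≤ g t + volterraConv K b t := add_nonneg (hg t ht) (volterraConv_nonneg hK hb₀ ht)
  rw [volterraConv_sub (hKi t) hb hbm ht, Pi.sub_apply, hbeq t ht, hbmeq t ht]
  have := mul_le_mul_of_nonneg_left (hδb t ht) hX
  nlinarith [mul_le_mul_of_nonneg_left this hα]

end Renewal

lemma essSup_nonneg_of_nonneg {X : Type*} [MeasurableSpace X] {ν : Measure X} {f : X → ℝ}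
    (hν : ν ≠ 0) (hf : IsBoundedUnder (· ≤ ·) (ae ν) f) (hf0 : ∀ x, 0 ≤ f x) :
    0 ≤ essSup f ν := by
  have := ae_neBot.2 hν
  obtain ⟨x, hx⟩ := (ae_le_essSup hf).exists
  exact (hf0 x).trans hx

lemma integral_exp_neg_mul {μ : ℝ} (hμ : μ ≠ 0) (t : ℝ) :
    ∫ a in (0 : ℝ)..t, exp (-μ * a) = (1 - exp (-μ * t)) / μ := by
  rw [intervalIntegral.integral_comp_mul_left exp (neg_ne_zero.2 hμ), integral_exp]
  simp only [mul_zero, exp_zero, smul_eq_mul]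
  field_simp
  ring

lemma setIntegral_Ioi_comp_sub (u : ℝ → ℝ) (t : ℝ) :
    ∫ a in Ioi t, u (a - t) = ∫ a in Ioi 0, u a := by
  simpa using (measurePreserving_sub_right volume t).setIntegral_preimage_emb
    (MeasurableEquiv.subRight t).measurableEmbedding u (Ioi 0)

lemma integrableOn_Ioi_comp_sub {u : ℝ → ℝ} (hu : IntegrableOn u (Ioi 0)) (t : ℝ) :
    IntegrableOn (fun a => u (a - t)) (Ioi t) := by
  simpa [Function.comp_def] using ((measurePreserving_sub_right volume t).integrableOn_comp_preimage
    (MeasurableEquiv.subRight t).measurableEmbedding (s := Ioi 0)).2 hu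

section Kernel

variable {β : ℝ → ℝ} {μ C : ℝ}

lemma integrableOn_Ioc_mul_exp_neg (hβm : Measurable β) (hβ0 : ∀ a, 0 ≤ β a)
    (hβC : ∀ᵐ a ∂volume.restrict (Ioi 0), β a ≤ C) (hμ : 0 ≤ μ) (t : ℝ) :
    IntegrableOn (fun a => β a * exp (-μ * a)) (Ioc 0 t) := by
  refine Measure.integrableOn_of_bounded measure_Ioc_lt_top.ne
    (by fun_prop : Measurable fun a => β a * exp (-μ * a)).aestronglyMeasurable (M := C) ?_
  filter_upwards [ae_restrict_of_ae_restrict_of_subset Ioc_subset_Ioi_self hβC,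
    ae_restrict_mem measurableSet_Ioc] with a ha hmem
  rw [Real.norm_of_nonneg (mul_nonneg (hβ0 a) (exp_pos _).le)]
  exact (mul_le_of_le_one_right (hβ0 a) (exp_le_one_iff.2 (by nlinarith [hmem.1]))).trans ha

lemma integral_mul_exp_neg_le (hβm : Measurable β) (hβ0 : ∀ a, 0 ≤ β a)
    (hβC : ∀ᵐ a ∂volume.restrict (Ioi 0), β a ≤ C) (hμ : 0 < μ) {t : ℝ} (ht : 0 ≤ t) :
    ∫ a in (0 : ℝ)..t, β a * exp (-μ * a) ≤ C * ((1 - exp (-μ * t)) / μ) := by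
  rw [← integral_exp_neg_mul hμ.ne', ← intervalIntegral.integral_const_mul,
    intervalIntegral.integral_of_le ht, intervalIntegral.integral_of_le ht]
  refine setIntegral_mono_ae_restrict (integrableOn_Ioc_mul_exp_neg hβm hβ0 hβC hμ.le t)
    (Continuous.integrableOn_Ioc (by fun_prop)) ?_
  filter_upwards [ae_restrict_of_ae_restrict_of_subset Ioc_subset_Ioi_self hβC] with a ha
  exact mul_le_mul_of_nonneg_right ha (exp_pos _).le

end Kernel

lemma setIntegral_Ioi_mul_comp_sub_le {β u : ℝ → ℝ} {C t : ℝ}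
    (hβ0 : ∀ a, 0 ≤ β a) (hβC : ∀ᵐ a ∂volume.restrict (Ioi 0), β a ≤ C)
    (hu : IntegrableOn u (Ioi 0)) (hu0 : ∀ a, 0 ≤ u a) (ht : 0 ≤ t) :
    ∫ a in Ioi t, β a * u (a - t) ≤ C * ∫ a in Ioi 0, u a := by
  rw [← setIntegral_Ioi_comp_sub u t, ← integral_const_mul]
  refine integral_mono_of_nonneg (Eventually.of_forall fun a => mul_nonneg (hβ0 a) (hu0 _))
    ((integrableOn_Ioi_comp_sub hu t).const_mul C) ?_
  filter_upwards [ae_restrict_of_ae_restrict_of_subset (Ioi_subset_Ioi ht) hβC] with a ha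
  exact mul_le_mul_of_nonneg_right ha (hu0 _)

theorem weighted_population_le_mul_max {β u₀ b : ℝ → ℝ} {μ α C t : ℝ} (hμ : 0 < μ)
    (hα : 0 ≤ α) (hβm : Measurable β) (hβ0 : ∀ a, 0 ≤ β a)
    (hβC : ∀ᵐ a ∂volume.restrict (Ioi 0), β a ≤ C) (hC : 0 ≤ C)
    (hu₀ : IntegrableOn u₀ (Ioi 0)) (hu₀0 : ∀ a, 0 ≤ u₀ a) (hb : ContinuousOn b (Ici 0))
    (hbB : ∀ s, 0 ≤ s → b s ≤ α * exp (-1)) (ht : 0 ≤ t) :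
    exp (-μ * t) * (∫ a in Ioi t, β a * u₀ (a - t))
        + volterraConv (fun a => β a * exp (-μ * a)) b t
      ≤ C * max (∫ a in Ioi 0, u₀ a) (α / (μ * exp 1)) := by
  set E := exp (-μ * t)
  set M := max (∫ a in Ioi 0, u₀ a) (α / (μ * exp 1))
  have hE1 : E ≤ 1 := exp_le_one_iff.2 (by nlinarith)
  have htail : ∫ a in Ioi t, β a * u₀ (a - t) ≤ C * M :=
    (setIntegral_Ioi_mul_comp_sub_le hβ0 hβC hu₀ hu₀0 ht).trans
      (mul_le_mul_of_nonneg_left (le_max_left _ _) hC)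
  have hconv : volterraConv (fun a => β a * exp (-μ * a)) b t ≤ (1 - E) * (C * M) :=
    calc _ ≤ α * exp (-1) * ∫ a in (0 : ℝ)..t, β a * exp (-μ * a) :=
          volterraConv_le_mul_integral (fun a => mul_nonneg (hβ0 a) (exp_pos _).le)
            (integrableOn_Ioc_mul_exp_neg hβm hβ0 hβC hμ.le t) hb hbB ht
      _ ≤ α * exp (-1) * (C * ((1 - E) / μ)) :=
          mul_le_mul_of_nonneg_left (integral_mul_exp_neg_le hβm hβ0 hβC hμ ht) (by positivity)
      _ = (1 - E) * (C * (α / (μ * exp 1))) := by rw [exp_neg]; field_simp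
      _ ≤ (1 - E) * (C * M) :=
          mul_le_mul_of_nonneg_left (mul_le_mul_of_nonneg_left (le_max_right _ _) hC)
            (sub_nonneg.2 hE1)
  calc _ ≤ E * (C * M) + (1 - E) * (C * M) :=
        add_le_add (mul_le_mul_of_nonneg_left htail (exp_pos _).le) hconv
    _ = C * M := by ring

theorem gurtin_maccamy_comparison_general
    (μ α : ℝ) (hμ : 0 < μ) (hα : 0 < α)
    (f : ℝ → ℝ) (hf : ∀ x, f x = x * Real.exp (-x))
    (β : ℝ → ℝ) (hβmeas : Measurable β) (hβnonneg : ∀ a, 0 ≤ β a)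
    (hβbdd : ∃ C : ℝ, ∀ᵐ a ∂(volume.restrict (Set.Ioi 0)), β a ≤ C)
    (u₀ : ℝ → ℝ) (hu₀int : IntegrableOn u₀ (Set.Ioi 0))
    (hu₀nonneg : ∀ a, 0 ≤ u₀ a)
    -- the nonlinear solution
    (b : ℝ → ℝ) (hbcont : ContinuousOn b (Set.Ici 0))
    (hb : ∀ t, 0 ≤ t →
      b t = α * f (Real.exp (-μ * t) * (∫ a in Set.Ioi t, β a * u₀ (a - t))
        + ∫ a in (0:ℝ)..t, β a * Real.exp (-μ * a) * b (t - a)))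
    (u : ℝ → ℝ → ℝ)
    (hu : ∀ t a, u t a = if t ≤ a then Real.exp (-μ * t) * u₀ (a - t)
                         else Real.exp (-μ * a) * b (t - a))
    -- the constants `U₀`, `Λ`, `δ₋`, `δ₊`
    (U₀ Λ δm δp : ℝ)
    (hU₀ : U₀ = ∫ a in Set.Ioi (0:ℝ), u₀ a)
    (hΛ : Λ = α / (μ * Real.exp 1))
    (hδm : δm = Real.exp (-(essSup β (volume.restrict (Set.Ioi 0))) * max U₀ Λ))
    (hδp : δp = 1)
    -- the linear lower solution
    (bm : ℝ → ℝ) (hbmcont : ContinuousOn bm (Set.Ici 0))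
    (hbm : ∀ t, 0 ≤ t →
      bm t = α * δm * (Real.exp (-μ * t) * (∫ a in Set.Ioi t, β a * u₀ (a - t))
        + ∫ a in (0:ℝ)..t, β a * Real.exp (-μ * a) * bm (t - a)))
    (um : ℝ → ℝ → ℝ)
    (hum : ∀ t a, um t a = if t ≤ a then Real.exp (-μ * t) * u₀ (a - t)
                           else Real.exp (-μ * a) * bm (t - a))
    -- the linear upper solution
    (bp : ℝ → ℝ) (hbpcont : ContinuousOn bp (Set.Ici 0))
    (hbp : ∀ t, 0 ≤ t →
      bp t = α * δp * (Real.exp (-μ * t) * (∫ a in Set.Ioi t, β a * u₀ (a - t))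
        + ∫ a in (0:ℝ)..t, β a * Real.exp (-μ * a) * bp (t - a)))
    (up : ℝ → ℝ → ℝ)
    (hup : ∀ t a, up t a = if t ≤ a then Real.exp (-μ * t) * u₀ (a - t)
                           else Real.exp (-μ * a) * bp (t - a)) :
    ∀ t, 0 ≤ t →
      ∀ᵐ a ∂(volume.restrict (Set.Ioi 0)),
        um t a ≤ u t a ∧ u t a ≤ up t a := by
  set C := essSup β (volume.restrict (Ioi 0))
  have hβC : ∀ᵐ a ∂volume.restrict (Ioi 0), β a ≤ C := ae_le_essSup hβbdd
  have hC : 0 ≤ C := essSup_nonneg_of_nonneg (by simp [Measure.restrict_eq_zero]) hβbdd hβnonneg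
  have hK : ∀ a, 0 ≤ β a * exp (-μ * a) := fun a => mul_nonneg (hβnonneg a) (exp_pos _).le
  have hKi := integrableOn_Ioc_mul_exp_neg hβmeas hβnonneg hβC hμ.le
  have hg : ∀ t, 0 ≤ t → 0 ≤ exp (-μ * t) * ∫ a in Ioi t, β a * u₀ (a - t) := fun t _ =>
    mul_nonneg (exp_pos _).le (setIntegral_nonneg measurableSet_Ioi fun a _ =>
      mul_nonneg (hβnonneg a) (hu₀nonneg _))
  simp only [hf] at hb
  have hbB : ∀ s, 0 ≤ s → b s ≤ α * exp (-1) := fun s hs =>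
    (hb s hs).trans_le (mul_le_mul_of_nonneg_left (mul_exp_neg_le_exp_neg_one _) hα.le)
  have hδ : ∀ t, 0 ≤ t → δm ≤ exp (-(exp (-μ * t) * (∫ a in Ioi t, β a * u₀ (a - t))
      + volterraConv (fun a => β a * exp (-μ * a)) b t)) := fun t ht => by
    rw [hδm, hU₀, hΛ, neg_mul, exp_le_exp, neg_le_neg_iff]
    exact weighted_population_le_mul_max hμ hα.le hβmeas hβnonneg hβC hC hu₀int hu₀nonneg
      hbcont hbB ht
  have hupper := renewal_solution_le_linear hK hKi hα.le hbcont hbpcont hb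
    (by simpa only [hδp, mul_one, volterraConv] using hbp)
  have hlower := linear_le_renewal_solution hK hKi hg hα.le (hδm ▸ (exp_pos _).le) hbcont
    hbmcont hb hbm hδ
  intro t _
  refine Eventually.of_forall fun a => ?_
  rw [hum, hu, hup]
  split_ifs with hta
  · exact ⟨le_rfl, le_rfl⟩
  · have hta' := sub_nonneg.2 (not_le.1 hta).le
    exact ⟨mul_le_mul_of_nonneg_left (hlower _ hta') (exp_pos _).le,
      mul_le_mul_of_nonneg_left (hupper _ hta') (exp_pos _).le⟩

/-- Comparison principle: with `δ₋ = exp(-‖β‖_∞ max(U₀,Λ))` and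
`δ₊ = 1`, the solutions `u₋, u₊` of the linear problems with boundary condition
`u_±(t,0) = α δ_± ∫₀^∞ β(a) u_±(t,a) da` satisfy `u₋ ≤ u ≤ u₊`. -/
theorem gurtin_maccamy_comparison
    (μ α : ℝ) (hμ : 0 < μ) (hα : 0 < α)
    (f : ℝ → ℝ) (hf : ∀ x, f x = x * Real.exp (-x))
    (β : ℝ → ℝ) (hβmeas : Measurable β) (hβnonneg : ∀ a, 0 ≤ β a)
    (hβbdd : ∃ C : ℝ, ∀ᵐ a ∂(volume.restrict (Set.Ioi 0)), β a ≤ C)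
    (hβnorm : (∫ a in Set.Ioi (0:ℝ), β a * Real.exp (-μ * a)) = 1)
    (u₀ : ℝ → ℝ) (hu₀int : IntegrableOn u₀ (Set.Ioi 0))
    (hu₀nonneg : ∀ a, 0 ≤ u₀ a)
    -- the nonlinear solution
    (b : ℝ → ℝ) (hbcont : ContinuousOn b (Set.Ici 0))
    (hb : ∀ t, 0 ≤ t →
      b t = α * f (Real.exp (-μ * t) * (∫ a in Set.Ioi t, β a * u₀ (a - t))
        + ∫ a in (0:ℝ)..t, β a * Real.exp (-μ * a) * b (t - a)))
    (u : ℝ → ℝ → ℝ)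
    (hu : ∀ t a, u t a = if t ≤ a then Real.exp (-μ * t) * u₀ (a - t)
                         else Real.exp (-μ * a) * b (t - a))
    -- the constants `U₀`, `Λ`, `δ₋`, `δ₊`
    (U₀ Λ δm δp : ℝ)
    (hU₀ : U₀ = ∫ a in Set.Ioi (0:ℝ), u₀ a)
    (hΛ : Λ = α / (μ * Real.exp 1))
    (hδm : δm = Real.exp (-(essSup β (volume.restrict (Set.Ioi 0))) * max U₀ Λ))
    (hδp : δp = 1)
    -- the linear lower solution
    (bm : ℝ → ℝ) (hbmcont : ContinuousOn bm (Set.Ici 0))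
    (hbm : ∀ t, 0 ≤ t →
      bm t = α * δm * (Real.exp (-μ * t) * (∫ a in Set.Ioi t, β a * u₀ (a - t))
        + ∫ a in (0:ℝ)..t, β a * Real.exp (-μ * a) * bm (t - a)))
    (um : ℝ → ℝ → ℝ)
    (hum : ∀ t a, um t a = if t ≤ a then Real.exp (-μ * t) * u₀ (a - t)
                           else Real.exp (-μ * a) * bm (t - a))
    -- the linear upper solution
    (bp : ℝ → ℝ) (hbpcont : ContinuousOn bp (Set.Ici 0))
    (hbp : ∀ t, 0 ≤ t →
      bp t = α * δp * (Real.exp (-μ * t) * (∫ a in Set.Ioi t, β a * u₀ (a - t))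
        + ∫ a in (0:ℝ)..t, β a * Real.exp (-μ * a) * bp (t - a)))
    (up : ℝ → ℝ → ℝ)
    (hup : ∀ t a, up t a = if t ≤ a then Real.exp (-μ * t) * u₀ (a - t)
                           else Real.exp (-μ * a) * bp (t - a)) :
    ∀ t, 0 ≤ t →
      ∀ᵐ a ∂(volume.restrict (Set.Ioi 0)),
        um t a ≤ u t a ∧ u t a ≤ up t a :=
  gurtin_maccamy_comparison_general μ α hμ hα f hf β hβmeas hβnonneg hβbdd u₀ hu₀int hu₀nonneg b
    hbcont hb u hu U₀ Λ δm δp hU₀ hΛ hδm hδp bm hbmcont hbm um hum bp hbpcont hbp up hup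
end

section
/- The function h : [0,∞) → ℝ given by h(ω) = ωτ + (n+1)·arctan( ω/(μ+κ) ) is strictly increasing, satisfies h(0) = 0 and h(ω) → ∞ as ω → ∞, and consequently for every k ∈ ℕ there exists exactly one ω_k > 0 with h(ω_k) = (2k+1)·π. Moreover, for α_k = exp( 1 + (1 + ω_k²/(μ+κ)²)^{(n+1)/2} ), the characteristic function λ ↦ Δ(λ, α_k) vanishes at λ = ±i·ω_k. -/
/-!
For real `s`, `1 + s i = √(1 + s²) e^{i arctan s}`. With `s = ω/(μ+κ)` and
`ln α = 1 + (1 + s²)^{(n+1)/2}` the moduli cancel in `Δ(iω, α)`, leaving `1 + e^{-i h(ω)}`,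
which vanishes as soon as `h(ω)` is an odd multiple of `π`; `Δ(-iω, α)` is its conjugate
because `h` is odd. Existence and uniqueness of `ω_k` is the intermediate value theorem for the
continuous, strictly increasing `h`.
-/

open Filter Complex

lemma one_add_mul_I_eq_sqrt_mul_exp (s : ℝ) :
    1 + s * I = (√(1 + s ^ 2) : ℝ) * exp ((Real.arctan s : ℝ) * I) := by
  have hsqrt : (√(1 + s ^ 2) : ℂ) ≠ 0 := ofReal_ne_zero.2 (Real.sqrt_pos.2 (by positivity)).ne'
  rw [exp_mul_I, ← ofReal_cos, ← ofReal_sin, Real.cos_arctan, Real.sin_arctan]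
  push_cast
  field_simp

lemma one_add_mul_I_pow (s : ℝ) (m : ℕ) :
    (1 + s * I) ^ m = ((1 + s ^ 2) ^ ((m : ℝ) / 2) : ℝ) * exp ((m * Real.arctan s : ℝ) * I) := by
  have hsqrt : √(1 + s ^ 2) ^ m = (1 + s ^ 2) ^ ((m : ℝ) / 2) := by
    rw [Real.sqrt_eq_rpow, ← Real.rpow_mul_natCast (by positivity)]
    ring_nf
  rw [one_add_mul_I_eq_sqrt_mul_exp, mul_pow, ← exp_nat_mul, ← ofReal_pow, hsqrt]
  push_cast
  ring_nf

lemma exp_odd_mul_pi_mul_I (k : ℕ) : exp (((2 * k + 1) * Real.pi : ℝ) * I) = -1 := by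
  have hodd : Odd (2 * (k : ℤ) + 1) := ⟨k, rfl⟩
  rw [← hodd.neg_one_zpow, ← exp_pi_mul_I, ← exp_int_mul]
  push_cast
  ring_nf

lemma existsUnique_pos_eq_of_strictMonoOn {f : ℝ → ℝ} (hf : Continuous f)
    (hmono : StrictMonoOn f (Set.Ici 0)) (h0 : f 0 = 0) (htop : Tendsto f atTop atTop)
    {y : ℝ} (hy : 0 < y) : ∃! x, 0 < x ∧ f x = y := by
  obtain ⟨b, hyb, hb⟩ := ((htop.eventually_ge_atTop y).and (eventually_ge_atTop 0)).exists
  obtain ⟨x, hx, rfl⟩ :=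
    intermediate_value_Icc hb hf.continuousOn ⟨by rw [h0]; exact hy.le, hyb⟩
  have hx0 : 0 < x := hx.1.lt_of_ne (by rintro rfl; exact hy.ne' h0)
  exact ⟨x, ⟨hx0, rfl⟩, fun x' ⟨hx', hfx'⟩ => hmono.injOn hx'.le hx0.le hfx'⟩

noncomputable def phase (τ c : ℝ) (n : ℕ) (ω : ℝ) : ℝ :=
  ω * τ + ((n : ℝ) + 1) * Real.arctan (ω / c)

noncomputable def charFun (τ c : ℝ) (n : ℕ) (lam : ℂ) (a : ℝ) : ℂ :=
  1 - (1 - (Real.log a : ℂ)) * exp (-lam * τ) * (1 + lam / c) ^ (-((n : ℤ) + 1))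

section
variable {τ c : ℝ} (n : ℕ)

lemma phase_zero : phase τ c n 0 = 0 := by simp [phase]

lemma phase_neg (ω : ℝ) : phase τ c n (-ω) = -phase τ c n ω := by
  simp only [phase, neg_div, Real.arctan_neg]
  ring

lemma continuous_phase : Continuous (phase τ c n) := by
  unfold phase; fun_prop

lemma strictMono_phase (hτ : 0 < τ) (hc : 0 ≤ c) : StrictMono (phase τ c n) := by
  intro a b hab
  have harctan := Real.arctan_strictMono.monotone (div_le_div_of_nonneg_right hab.le hc)
  exact add_lt_add_of_lt_of_le (by gcongr) (by gcongr)

lemma tendsto_phase_atTop (hτ : 0 < τ) : Tendsto (phase τ c n) atTop atTop := by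
  refine tendsto_atTop_mono (fun ω => ?_)
    (tendsto_atTop_add_const_right _ (-((n + 1) * (Real.pi / 2))) (tendsto_id.atTop_mul_const hτ))
  have := Real.neg_pi_div_two_lt_arctan (ω / c)
  simp only [phase, id]
  nlinarith

lemma charFun_I_mul_eq_one_add_exp_phase (ω : ℝ) :
    charFun τ c n (I * ω) (Real.exp (1 + (1 + ω ^ 2 / c ^ 2) ^ (((n : ℝ) + 1) / 2)))
      = 1 + exp (-(phase τ c n ω : ℂ) * I) := by
  have hR : (((1 + (ω / c) ^ 2) ^ (((n : ℝ) + 1) / 2) : ℝ) : ℂ) ≠ 0 :=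
    ofReal_ne_zero.2 (by positivity)
  have hbase : 1 + I * ω / c = 1 + ((ω / c : ℝ) : ℂ) * I := by
    push_cast; ring
  have hexp : -((n : ℤ) + 1) = -((n + 1 : ℕ) : ℤ) := by push_cast; ring
  rw [charFun, Real.log_exp, ← div_pow, hbase, hexp, zpow_neg, zpow_natCast, one_add_mul_I_pow,
    Nat.cast_succ, mul_inv, ← exp_neg, ofReal_add, ofReal_one, sub_add_cancel_left, neg_mul,
    neg_mul, sub_neg_eq_add, mul_mul_mul_comm, mul_inv_cancel₀ hR, one_mul, ← exp_add]
  simp only [phase]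
  push_cast
  ring_nf

end

/-- The function `h(ω) = ωτ + (n+1) arctan(ω/(μ+κ))` is strictly
increasing on `[0,∞)`, `h(0) = 0`, `h(ω) → ∞` as `ω → ∞`; hence for every `k ∈ ℕ`
there is exactly one `ω_k > 0` with `h(ω_k) = (2k+1)π`, and for
`α_k = exp(1 + (1 + ω_k²/(μ+κ)²)^{(n+1)/2})` the characteristic function
`λ ↦ Δ(λ, α_k)` vanishes at `λ = ± i ω_k`. -/
theorem characteristic_roots_existence_uniqueness
    (μ τ κ : ℝ) (hμ : 0 < μ) (hτ : 0 < τ) (hκ : 0 < κ) (n : ℕ)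
    (Δ : ℂ → ℝ → ℂ)
    (hΔ : ∀ (lam : ℂ) (a : ℝ),
      Δ lam a = 1 - ((1 : ℂ) - (Real.log a : ℂ)) * Complex.exp (-lam * (τ : ℂ))
        * ((1 : ℂ) + lam / ((μ : ℂ) + (κ : ℂ))) ^ (-((n : ℤ) + 1)))
    (h : ℝ → ℝ)
    (hh : ∀ ω, h ω = ω * τ + ((n : ℝ) + 1) * Real.arctan (ω / (μ + κ))) :
    StrictMonoOn h (Set.Ici 0) ∧
    h 0 = 0 ∧
    Tendsto h atTop atTop ∧
    (∀ k : ℕ, ∃! ω : ℝ, 0 < ω ∧ h ω = (2 * (k : ℝ) + 1) * Real.pi) ∧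
    (∀ k : ℕ, ∀ ω : ℝ, 0 < ω → h ω = (2 * (k : ℝ) + 1) * Real.pi →
      Δ (Complex.I * (ω : ℂ))
          (Real.exp (1 + (1 + ω ^ 2 / (μ + κ) ^ 2) ^ (((n : ℝ) + 1) / 2))) = 0 ∧
      Δ (-(Complex.I * (ω : ℂ)))
          (Real.exp (1 + (1 + ω ^ 2 / (μ + κ) ^ 2) ^ (((n : ℝ) + 1) / 2))) = 0) := by
  obtain rfl : h = phase τ (μ + κ) n := funext hh
  obtain rfl : Δ = charFun τ (μ + κ) n :=
    funext fun lam => funext fun a => by rw [hΔ, charFun, ofReal_add]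
  have hmono := strictMono_phase n hτ (add_pos hμ hκ).le
  refine ⟨hmono.strictMonoOn _, phase_zero n, tendsto_phase_atTop n hτ, fun k =>
    existsUnique_pos_eq_of_strictMonoOn (continuous_phase n) (hmono.strictMonoOn _) (phase_zero n)
      (tendsto_phase_atTop n hτ) (by positivity), fun k ω _ hω => ⟨?_, ?_⟩⟩
  · rw [charFun_I_mul_eq_one_add_exp_phase, hω, neg_mul, exp_neg, exp_odd_mul_pi_mul_I]
    norm_num
  · rw [← neg_sq, ← mul_neg, ← ofReal_neg, charFun_I_mul_eq_one_add_exp_phase, phase_neg, hω,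
      ofReal_neg, neg_neg, exp_odd_mul_pi_mul_I]
    norm_num
end

section
/- Fix k ∈ ℕ, let ω_k > 0 be the unique solution of ω_k·τ + (n+1)·arctan( ω_k/(μ+κ) ) = (2k+1)·π, and let α_k = exp( 1 + (1 + ω_k²/(μ+κ)²)^{(n+1)/2} ) (so that Δ(±i·ω_k, α_k) = 0). Then: (i) the partial derivative of Δ in λ at (i·ω_k, α_k) equals τ + (n+1)/(i·ω_k + μ + κ), whose real part τ + (n+1)(μ+κ)/((μ+κ)² + ω_k²) is strictly positive; (ii) the partial derivative of Δ in α at (i·ω_k, α_k) equals 1/( α_k·(1 − ln α_k) ), which is strictly negative; (iii) there exist ρ_k > 0 and a continuously differentiable map λ̂_k : (α_k − ρ_k, α_k + ρ_k) → ℂ such that λ̂_k(α_k) = i·ω_k, Δ( λ̂_k(α), α ) = 0 for all α ∈ (α_k − ρ_k, α_k + ρ_k), and Re( λ̂_k′(α_k) ) > 0. -/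
/-!
Write `Δ(λ, α) = 1 - (1 - ln α) K(λ)` with `K(λ) = e^{-λτ} (1 + λ/(μ+κ))^{-(n+1)}`. In polar form
`1 + iω/(μ+κ) = r e^{iθ}` with `r = √(1 + ω²/(μ+κ)²)` and `θ = arctan (ω/(μ+κ))`, so the equation
defining `ω_k` says exactly that `K(iω_k) = -r^{-(n+1)}`, while `ln α_k = 1 + r^{n+1}`: hence
`Δ(iω_k, α_k) = 0`. At any root `(1 - ln α) K(λ) = 1`, and together with the logarithmic derivative
`K'/K = -(τ + (n+1)/(λ + μ + κ))` this gives both partial derivatives. The one in `λ` is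
complex-linear and nonzero, so the implicit function theorem on `ℝ × ℂ` produces a `C¹` branch
with `λ̂'(α_k) = -∂_αΔ / ∂_λΔ`, whose real part is positive since `∂_αΔ < 0 < Re ∂_λΔ`.
-/

open Topology Set Complex

theorem HasFDerivAt.apply_inr_eq_mul {F : ℝ → ℂ → ℂ} {a₀ : ℝ} {z₀ d : ℂ}
    {f' : ℝ × ℂ →L[ℝ] ℂ} (hf' : HasFDerivAt (Function.uncurry F) f' (a₀, z₀))
    (hFz : HasDerivAt (F a₀) d z₀) (z : ℂ) : f' (0, z) = d * z := by
  have h₁ := hf'.comp z₀ (hasFDerivAt_prodMk_right a₀ z₀)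
  simpa [mul_comm] using congrArg (· z) (h₁.unique (hFz.hasFDerivAt.restrictScalars ℝ))

theorem HasFDerivAt.apply_inl_eq_mul {F : ℝ → ℂ → ℂ} {a₀ : ℝ} {z₀ c : ℂ}
    {f' : ℝ × ℂ →L[ℝ] ℂ} (hf' : HasFDerivAt (Function.uncurry F) f' (a₀, z₀))
    (hFa : HasDerivAt (F · z₀) c a₀) (a : ℝ) : f' (a, 0) = a * c := by
  have h₁ := hf'.comp a₀ (hasFDerivAt_prodMk_left (𝕜 := ℝ) a₀ z₀)
  simpa [real_smul] using congrArg (· a) (h₁.unique hFa.hasFDerivAt)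

theorem exists_contDiffOn_implicit_branch {F : ℝ → ℂ → ℂ} {a₀ : ℝ} {z₀ c d : ℂ}
    (hF : ContDiffAt ℝ 1 (Function.uncurry F) (a₀, z₀))
    (hFa : HasDerivAt (F · z₀) c a₀) (hFz : HasDerivAt (F a₀) d z₀) (hd : d ≠ 0) :
    ∃ ρ > (0 : ℝ), ∃ g : ℝ → ℂ, ContDiffOn ℝ 1 g (Ioo (a₀ - ρ) (a₀ + ρ)) ∧
      g a₀ = z₀ ∧ (∀ a ∈ Ioo (a₀ - ρ) (a₀ + ρ), F a (g a) = F a₀ z₀) ∧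
      HasDerivAt g (-c / d) a₀ := by
  have hf' := (hF.differentiableAt one_ne_zero).hasFDerivAt
  have hinv : (fderiv ℝ (Function.uncurry F) (a₀, z₀) ∘L .inr ℝ ℝ ℂ).IsInvertible :=
    ⟨(ContinuousLinearEquiv.unitsEquivAut ℂ (Units.mk0 d hd)).restrictScalars ℝ, by
      ext z; simp [hf'.apply_inr_eq_mul hFz, mul_comm]⟩
  obtain ⟨g, hg₀, hgF, hgC⟩ : ∃ g : ℝ → ℂ, g a₀ = z₀ ∧
      (∀ᶠ a in 𝓝 a₀, F a (g a) = F a₀ z₀) ∧ ContDiffAt ℝ 1 g a₀ :=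
    ⟨_, hF.implicitFunction_apply_self one_ne_zero hinv,
      hF.eventually_apply_implicitFunction one_ne_zero hinv,
      hF.contDiffAt_implicitFunction one_ne_zero hinv⟩
  have hg' := (hgC.differentiableAt one_ne_zero).hasDerivAt
  have hcomp : HasDerivAt (fun a => F a (g a)) (c + d * deriv g a₀) a₀ := by
    refine (hf'.comp_hasDerivAt_of_eq a₀ ((hasDerivAt_id a₀).prodMk hg')
      (by rw [id, hg₀])).congr_deriv ?_
    rw [show ((1 : ℝ), deriv g a₀) = (1, 0) + (0, deriv g a₀) by simp, map_add,
      hf'.apply_inl_eq_mul hFa, hf'.apply_inr_eq_mul hFz]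
    simp
  have hderiv : c + d * deriv g a₀ = 0 :=
    hcomp.unique ((hasDerivAt_const a₀ (F a₀ z₀)).congr_of_eventuallyEq hgF)
  obtain ⟨ρ, hρ, hball⟩ :=
    Metric.eventually_nhds_iff_ball.1 ((hgC.eventually (by simp)).and hgF)
  refine ⟨ρ, hρ, g, ?_, hg₀, ?_, hg'.congr_deriv ?_⟩
  · rw [← Real.ball_eq_Ioo]
    exact fun a ha => (hball a ha).1.contDiffWithinAt
  · rw [← Real.ball_eq_Ioo]
    exact fun a ha => (hball a ha).2
  · rw [eq_div_iff hd]
    linear_combination hderiv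

noncomputable def delayKernel (τ m : ℂ) (N : ℤ) (lam : ℂ) : ℂ :=
  exp (-lam * τ) * (1 + lam / m) ^ (-N)

theorem hasDerivAt_delayKernel {τ m lam : ℂ} (N : ℤ) (hm : m ≠ 0) (hlam : lam + m ≠ 0) :
    HasDerivAt (delayKernel τ m N) (-(τ + N / (lam + m)) * delayKernel τ m N lam) lam := by
  have hw : lam + m = m * (1 + lam / m) := by field_simp; ring
  have hw0 : 1 + lam / m ≠ 0 := right_ne_zero_of_mul (hw ▸ hlam)
  have hexp : HasDerivAt (fun l => exp (-l * τ)) (exp (-lam * τ) * -τ) lam := by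
    simpa using ((hasDerivAt_id lam).neg.mul_const τ).cexp
  have hpow : HasDerivAt (fun l => (1 + l / m) ^ (-N))
      ((-N : ℤ) * (1 + lam / m) ^ (-N - 1) * (1 / m)) lam :=
    (hasDerivAt_zpow (-N) _ (Or.inl hw0)).comp (h := fun l => 1 + l / m) lam
      (((hasDerivAt_id' lam).div_const m).const_add 1)
  refine (hexp.mul hpow).congr_deriv ?_
  rw [delayKernel, zpow_sub_one₀ hw0, hw]
  generalize 1 + lam / m = w at hw0 ⊢
  field_simp
  push_cast
  ring

theorem contDiffAt_delayKernel {τ m lam : ℂ} (N : ℤ) (hm : m ≠ 0) (hlam : lam + m ≠ 0) :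
    ContDiffAt ℂ 1 (delayKernel τ m N) lam := by
  have hopen : IsOpen {l : ℂ | l + m ≠ 0} :=
    isOpen_ne_fun (continuous_id.add continuous_const) continuous_const
  refine (DifferentiableOn.contDiffOn (fun l hl => ?_) hopen).contDiffAt
    (hopen.mem_nhds hlam)
  exact (hasDerivAt_delayKernel N hm hl).differentiableAt.differentiableWithinAt

theorem one_add_ofReal_mul_I_eq (x : ℝ) :
    (1 + x * I : ℂ) = √(1 + x ^ 2) * exp (Real.arctan x * I) := by
  have hr : (√(1 + x ^ 2) : ℂ) ≠ 0 := ofReal_ne_zero.2 (by positivity)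
  rw [exp_mul_I, ← ofReal_cos, ← ofReal_sin, Real.cos_arctan, Real.sin_arctan]
  push_cast
  field_simp

theorem exp_neg_odd_mul_pi_mul_I (k : ℤ) :
    exp (-(((2 * k + 1) * Real.pi : ℝ) : ℂ) * I) = -1 := by
  have h : -(((2 * k + 1) * Real.pi : ℝ) : ℂ) * I
      = (-k : ℤ) * (2 * Real.pi * I) + -(Real.pi * I) := by
    push_cast
    ring
  rw [h, exp_add, exp_int_mul_two_pi_mul_I, exp_neg_pi_mul_I, one_mul]

theorem delayKernel_I_mul_eq {τ m ω : ℝ} {N k : ℤ}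
    (h : ω * τ + N * Real.arctan (ω / m) = (2 * k + 1) * Real.pi) :
    delayKernel τ m N (I * ω) = -((√(1 + (ω / m) ^ 2) : ℂ) ^ N)⁻¹ := by
  have hpolar :
      1 + I * ω / m = (√(1 + (ω / m) ^ 2) : ℂ) * exp (Real.arctan (ω / m) * I) := by
    rw [← one_add_ofReal_mul_I_eq]
    push_cast
    ring
  have hphase : exp (-(I * ω) * τ) * exp (Real.arctan (ω / m) * I) ^ (-N) = -1 := by
    rw [← exp_int_mul, ← exp_add, ← exp_neg_odd_mul_pi_mul_I k, ← h]
    push_cast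
    ring_nf
  rw [delayKernel, hpolar, mul_zpow, zpow_neg]
  linear_combination ((√(1 + (ω / m) ^ 2) : ℂ) ^ N)⁻¹ * hphase

/-- `characteristic τ (μ + κ) (n + 1) λ α` is `Δ(λ, α)`. -/
noncomputable def characteristic (τ m : ℂ) (N : ℤ) (lam : ℂ) (a : ℝ) : ℂ :=
  1 - (1 - Real.log a) * delayKernel τ m N lam

section characteristic

variable {τ m lam : ℂ} {N : ℤ} {a : ℝ}

theorem hasDerivAt_characteristic_lam_of_eq_zero (hm : m ≠ 0) (hlam : lam + m ≠ 0)
    (h : characteristic τ m N lam a = 0) :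
    HasDerivAt (characteristic τ m N · a) (τ + N / (lam + m)) lam := by
  refine (((hasDerivAt_delayKernel N hm hlam).const_mul _).const_sub 1).congr_deriv ?_
  rw [characteristic] at h
  linear_combination -(τ + N / (lam + m)) * h

theorem hasDerivAt_characteristic_param_of_eq_zero (ha : a ≠ 0)
    (h : characteristic τ m N lam a = 0) :
    HasDerivAt (characteristic τ m N lam) (1 / (a * (1 - Real.log a))) a := by
  rw [characteristic] at h
  have hlog : (1 - Real.log a : ℂ) ≠ 0 := by
    rintro hz
    simp [hz] at h
  refine ((((Real.hasDerivAt_log ha).ofReal_comp.const_sub 1).mul_const _).const_sub 1).congr_deriv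
    ?_
  have ha' : (a : ℂ) ≠ 0 := ofReal_ne_zero.2 ha
  push_cast
  field_simp
  linear_combination -h

theorem contDiffAt_uncurry_characteristic (hm : m ≠ 0) (hlam : lam + m ≠ 0) (ha : a ≠ 0) :
    ContDiffAt ℝ 1 (Function.uncurry fun x l => characteristic τ m N l x) (a, lam) := by
  have hlog : ContDiffAt ℝ 1 (fun a : ℝ => (Real.log a : ℂ)) a :=
    ofRealCLM.contDiff.contDiffAt.comp a (Real.contDiffAt_log.2 ha)
  have hK := (contDiffAt_delayKernel (τ := τ) N hm hlam).restrict_scalars ℝ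
  have h₁ : ContDiffAt ℝ 1 (fun p : ℝ × ℂ => (Real.log p.1 : ℂ)) (a, lam) :=
    hlog.comp (a, lam) contDiffAt_fst
  have h₂ : ContDiffAt ℝ 1 (fun p : ℝ × ℂ => delayKernel τ m N p.2) (a, lam) :=
    hK.comp (a, lam) contDiffAt_snd
  exact contDiffAt_const.sub ((contDiffAt_const.sub h₁).mul h₂)

end characteristic

theorem characteristic_I_mul_eq_zero {τ m ω : ℝ} {N : ℕ} {k : ℤ}
    (h : ω * τ + N * Real.arctan (ω / m) = (2 * k + 1) * Real.pi) :
    characteristic τ m N (I * ω) (Real.exp (1 + (1 + ω ^ 2 / m ^ 2) ^ ((N : ℝ) / 2))) = 0 := by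
  have hr : (√(1 + (ω / m) ^ 2) : ℂ) ≠ 0 := ofReal_ne_zero.2 (by positivity)
  rw [characteristic, Real.log_exp, delayKernel_I_mul_eq (N := N) (by exact_mod_cast h),
    ← div_pow, Real.rpow_div_two_eq_sqrt _ (by positivity), Real.rpow_natCast, zpow_natCast]
  generalize √(1 + (ω / m) ^ 2) = r at hr ⊢
  push_cast
  field_simp
  ring

theorem re_ofReal_div_pos {c : ℝ} {d : ℂ} (hc : 0 < c) (hd : 0 < d.re) :
    0 < ((c : ℂ) / d).re := by
  rw [div_re, ofReal_re, ofReal_im, zero_mul, zero_div, add_zero]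
  exact div_pos (mul_pos hc hd) (normSq_pos.2 fun h => by simp [h] at hd)

theorem characteristic_transversality_general
    (μ τ κ : ℝ) (hμ : 0 < μ) (hτ : 0 < τ) (hκ : 0 < κ) (n : ℕ)
    (Δ : ℂ → ℝ → ℂ)
    (hΔ : ∀ (lam : ℂ) (a : ℝ),
      Δ lam a = 1 - ((1 : ℂ) - (Real.log a : ℂ)) * Complex.exp (-lam * (τ : ℂ))
        * ((1 : ℂ) + lam / ((μ : ℂ) + (κ : ℂ))) ^ (-((n : ℤ) + 1)))
    (k : ℕ) (ωk : ℝ)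
    (hωkeq : ωk * τ + ((n : ℝ) + 1) * Real.arctan (ωk / (μ + κ))
      = (2 * (k : ℝ) + 1) * Real.pi)
    (αk : ℝ)
    (hαk : αk = Real.exp (1 + (1 + ωk ^ 2 / (μ + κ) ^ 2) ^ (((n : ℝ) + 1) / 2))) :
    -- (i) partial derivative in λ
    (HasDerivAt (fun lam : ℂ => Δ lam αk)
        ((τ : ℂ) + ((n : ℂ) + 1) / (Complex.I * (ωk : ℂ) + (μ : ℂ) + (κ : ℂ)))
        (Complex.I * (ωk : ℂ)) ∧
      ((τ : ℂ) + ((n : ℂ) + 1) / (Complex.I * (ωk : ℂ) + (μ : ℂ) + (κ : ℂ))).re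
        = τ + ((n : ℝ) + 1) * (μ + κ) / ((μ + κ) ^ 2 + ωk ^ 2) ∧
      0 < τ + ((n : ℝ) + 1) * (μ + κ) / ((μ + κ) ^ 2 + ωk ^ 2)) ∧
    -- (ii) partial derivative in α
    (HasDerivAt (fun a : ℝ => Δ (Complex.I * (ωk : ℂ)) a)
        ((1 : ℂ) / ((αk : ℂ) * ((1 : ℂ) - (Real.log αk : ℂ)))) αk ∧
      1 / (αk * (1 - Real.log αk)) < 0) ∧
    -- (iii) local C¹ branch of roots with transversality
    (∃ ρ > (0:ℝ), ∃ lamhat : ℝ → ℂ,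
      ContDiffOn ℝ 1 lamhat (Set.Ioo (αk - ρ) (αk + ρ)) ∧
      lamhat αk = Complex.I * (ωk : ℂ) ∧
      (∀ a ∈ Set.Ioo (αk - ρ) (αk + ρ), Δ (lamhat a) a = 0) ∧
      0 < (deriv lamhat αk).re) := by
  have hm : (0 : ℝ) < μ + κ := by linarith
  have hm' : ((μ + κ : ℝ) : ℂ) ≠ 0 := ofReal_ne_zero.2 hm.ne'
  have hα : 0 < αk := hαk ▸ Real.exp_pos _
  obtain rfl : Δ = fun lam a => characteristic τ (μ + κ : ℝ) ((n + 1 : ℕ) : ℤ) lam a := by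
    ext lam a
    rw [hΔ, characteristic, delayKernel]
    push_cast
    ring
  have hroot : characteristic τ (μ + κ : ℝ) ((n + 1 : ℕ) : ℤ) (I * ωk) αk = 0 := by
    rw [hαk]
    convert characteristic_I_mul_eq_zero (N := n + 1) (k := k) (by push_cast; exact hωkeq)
      using 5
    push_cast
    ring
  have hlam : I * ωk + ((μ + κ : ℝ) : ℂ) ≠ 0 := fun h =>
    hm.ne' (by simpa using congrArg re h)
  have hlog : 1 - Real.log αk < 0 := by
    rw [hαk, Real.log_exp]
    linarith [Real.rpow_pos_of_pos (by positivity : (0 : ℝ) < 1 + ωk ^ 2 / (μ + κ) ^ 2)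
      (((n : ℝ) + 1) / 2)]
  have hre : ((τ : ℂ) + ((n : ℂ) + 1) / (I * ωk + μ + κ)).re
      = τ + ((n : ℝ) + 1) * (μ + κ) / ((μ + κ) ^ 2 + ωk ^ 2) := by
    simp [div_re, normSq, sq]
  have hdlam : HasDerivAt (fun lam => characteristic τ (μ + κ : ℝ) ((n + 1 : ℕ) : ℤ) lam αk)
      ((τ : ℂ) + ((n : ℂ) + 1) / (I * ωk + μ + κ)) (I * ωk) :=
    (hasDerivAt_characteristic_lam_of_eq_zero hm' hlam hroot).congr_deriv (by push_cast; ring)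
  have hdα := hasDerivAt_characteristic_param_of_eq_zero hα.ne' hroot
  have hdα' : HasDerivAt _ ((1 / (αk * (1 - Real.log αk)) : ℝ) : ℂ) αk :=
    hdα.congr_deriv (by push_cast; rfl)
  have hsign : 1 / (αk * (1 - Real.log αk)) < 0 :=
    one_div_neg.2 (mul_neg_of_pos_of_neg hα hlog)
  have hd : 0 < ((τ : ℂ) + ((n : ℂ) + 1) / (I * ωk + μ + κ)).re := hre ▸ by positivity
  obtain ⟨ρ, hρ, g, hgC, hg₀, hgroot, hg'⟩ := exists_contDiffOn_implicit_branch
    (contDiffAt_uncurry_characteristic hm' hlam hα.ne') hdα' hdlam (fun h => by simp [h] at hd)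
  refine ⟨⟨hdlam, hre, hre ▸ hd⟩, ⟨hdα, hsign⟩, ρ, hρ, g, hgC, hg₀,
    fun a ha => (hgroot a ha).trans hroot, ?_⟩
  rw [hg'.deriv, ← ofReal_neg]
  exact re_ofReal_div_pos (neg_pos.2 hsign) hd

/-- Transversality at the Hopf bifurcation point: with `ω_k > 0`
solving `ω_k τ + (n+1) arctan(ω_k/(μ+κ)) = (2k+1)π` and
`α_k = exp(1 + (1 + ω_k²/(μ+κ)²)^{(n+1)/2})`, the partial derivative of `Δ` in `λ`
at `(iω_k, α_k)` is `τ + (n+1)/(iω_k + μ + κ)` with strictly positive real part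
`τ + (n+1)(μ+κ)/((μ+κ)² + ω_k²)`, the partial derivative in `α` is
`1/(α_k (1 - ln α_k)) < 0`, and there is a local `C¹` branch `λ̂_k` of roots with
`λ̂_k(α_k) = iω_k` and `Re λ̂_k'(α_k) > 0`. -/
theorem characteristic_transversality
    (μ τ κ : ℝ) (hμ : 0 < μ) (hτ : 0 < τ) (hκ : 0 < κ) (n : ℕ)
    (Δ : ℂ → ℝ → ℂ)
    (hΔ : ∀ (lam : ℂ) (a : ℝ),
      Δ lam a = 1 - ((1 : ℂ) - (Real.log a : ℂ)) * Complex.exp (-lam * (τ : ℂ))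
        * ((1 : ℂ) + lam / ((μ : ℂ) + (κ : ℂ))) ^ (-((n : ℤ) + 1)))
    (k : ℕ) (ωk : ℝ) (hωk : 0 < ωk)
    (hωkeq : ωk * τ + ((n : ℝ) + 1) * Real.arctan (ωk / (μ + κ))
      = (2 * (k : ℝ) + 1) * Real.pi)
    (αk : ℝ)
    (hαk : αk = Real.exp (1 + (1 + ωk ^ 2 / (μ + κ) ^ 2) ^ (((n : ℝ) + 1) / 2))) :
    -- (i) partial derivative in λ
    (HasDerivAt (fun lam : ℂ => Δ lam αk)
        ((τ : ℂ) + ((n : ℂ) + 1) / (Complex.I * (ωk : ℂ) + (μ : ℂ) + (κ : ℂ)))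
        (Complex.I * (ωk : ℂ)) ∧
      ((τ : ℂ) + ((n : ℂ) + 1) / (Complex.I * (ωk : ℂ) + (μ : ℂ) + (κ : ℂ))).re
        = τ + ((n : ℝ) + 1) * (μ + κ) / ((μ + κ) ^ 2 + ωk ^ 2) ∧
      0 < τ + ((n : ℝ) + 1) * (μ + κ) / ((μ + κ) ^ 2 + ωk ^ 2)) ∧
    -- (ii) partial derivative in α
    (HasDerivAt (fun a : ℝ => Δ (Complex.I * (ωk : ℂ)) a)
        ((1 : ℂ) / ((αk : ℂ) * ((1 : ℂ) - (Real.log αk : ℂ)))) αk ∧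
      1 / (αk * (1 - Real.log αk)) < 0) ∧
    -- (iii) local C¹ branch of roots with transversality
    (∃ ρ > (0:ℝ), ∃ lamhat : ℝ → ℂ,
      ContDiffOn ℝ 1 lamhat (Set.Ioo (αk - ρ) (αk + ρ)) ∧
      lamhat αk = Complex.I * (ωk : ℂ) ∧
      (∀ a ∈ Set.Ioo (αk - ρ) (αk + ρ), Δ (lamhat a) a = 0) ∧
      0 < (deriv lamhat αk).re) :=
  characteristic_transversality_general μ τ κ hμ hτ hκ n Δ hΔ k ωk hωkeq αk hαk
end
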